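/- arXiv:math/0703342 — 2 statements merged into one kernel-verified Lean document; each statement's English description precedes it below -/
import Mathlib

section
/- Let G be a group, A an abelian group with G-action, c : G × G → A a normalized 2-cocycle, H a normal subgroup of G acting trivially on A, and λ : H → A a map whose inverse coboundary is c restricted to H (i.e. c(h₁,h₂) = λ(h₁h₂)λ(h₁)⁻¹λ(h₂)⁻¹). Then the graph of λ is a normal subgroup of A ⋊_c G if and only if for all g ∈ G and h ∈ H: c(g,h)·c(ghg⁻¹,g)⁻¹ = (g·λ(h)⁻¹)·λ(ghg⁻¹). -/
/-- With `G`, `A`, a normalized 2-cocycle `c`, a normal subgroup `H` acting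
trivially on `A`, and `lam` whose inverse coboundary is `c` on `H`, the graph of `lam` is a
normal subgroup of the extension `A ⋊_c G` if and only if
`c(g,h)·c(ghg⁻¹,g)⁻¹ = (g·λ(h)⁻¹)·λ(ghg⁻¹)` for all `g ∈ G`, `h ∈ H`. -/
theorem stmt1 {G A : Type*} [Group G] [CommGroup A]
    (ρ : G →* MulAut A) (c : G → G → A)
    (hcoc : ∀ f g h : G, ρ f (c g h) * c f (g * h) = c (f * g) h * c f g)
    (hn1 : ∀ g, c 1 g = 1) (hn2 : ∀ g, c g 1 = 1)
    (H : Subgroup G) (hHnormal : H.Normal)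
    (htriv : ∀ h ∈ H, ∀ a : A, ρ h a = a)
    (lam : G → A)
    (hlam : ∀ h₁ ∈ H, ∀ h₂ ∈ H,
      c h₁ h₂ = lam (h₁ * h₂) * (lam h₁)⁻¹ * (lam h₂)⁻¹)
    -- the extension group `A ⋊_c G`: a group structure on `A × G` with the cocycle product
    (instExt : Group (A × G))
    (hmul : ∀ p q : A × G, p * q = (p.1 * ρ p.2 q.1 * c p.2 q.2, p.2 * q.2)) :
    (∀ p ∈ {p : A × G | ∃ h ∈ H, p = (lam h, h)}, ∀ q : A × G,
        q * p * q⁻¹ ∈ {p : A × G | ∃ h ∈ H, p = (lam h, h)}) ↔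
    (∀ g : G, ∀ h ∈ H,
      c g h * (c (g * h * g⁻¹) g)⁻¹ = (ρ g (lam h))⁻¹ * lam (g * h * g⁻¹)) := by

  constructor
  · intro hnorm g h hh
    obtain ⟨h', hh', heq⟩ := hnorm (lam h, h) ⟨h, hh, rfl⟩ (1, g)
    have heq2 : ((1 : A), g) * ((lam h, h) : A × G) = (lam h', h') * (1, g) := by
      have := congrArg (fun x : A × G => x * (1, g)) heq
      simpa [mul_assoc] using this
    rw [hmul, hmul] at heq2
    have h1 := congrArg Prod.fst heq2
    have h2 := congrArg Prod.snd heq2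
    simp only at h1 h2
    have hh'' : h' = g * h * g⁻¹ := by
      have := congrArg (fun x : G => x * g⁻¹) h2
      simpa [mul_assoc] using this.symm
    subst hh''
    simp only [map_one, one_mul, mul_one] at h1
    have := congrArg (fun x : A => (ρ g (lam h))⁻¹ * x * (c (g * h * g⁻¹) g)⁻¹) h1
    calc c g h * (c (g * h * g⁻¹) g)⁻¹
        = (ρ g (lam h))⁻¹ * (ρ g (lam h) * c g h) * (c (g * h * g⁻¹) g)⁻¹ := by
          group
      _ = (ρ g (lam h))⁻¹ * (lam (g * h * g⁻¹) * c (g * h * g⁻¹) g) *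
            (c (g * h * g⁻¹) g)⁻¹ := by rw [h1]
      _ = (ρ g (lam h))⁻¹ * lam (g * h * g⁻¹) := by group
  · intro hc p hp q
    obtain ⟨h, hh, rfl⟩ := hp
    obtain ⟨a, g⟩ := q
    refine ⟨g * h * g⁻¹, hHnormal.conj_mem h hh g, ?_⟩
    have key : ρ g (lam h) * c g h = lam (g * h * g⁻¹) * c (g * h * g⁻¹) g := by
      have k := hc g h hh
      have := congrArg (fun x : A => ρ g (lam h) * x * c (g * h * g⁻¹) g) k
      calc ρ g (lam h) * c g h
          = ρ g (lam h) * (c g h * (c (g * h * g⁻¹) g)⁻¹) * c (g * h * g⁻¹) g := by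
            group
        _ = ρ g (lam h) * ((ρ g (lam h))⁻¹ * lam (g * h * g⁻¹)) * c (g * h * g⁻¹) g := by
            rw [k]
        _ = lam (g * h * g⁻¹) * c (g * h * g⁻¹) g := by group
    have goal2 : ((a, g) : A × G) * (lam h, h) = (lam (g * h * g⁻¹), g * h * g⁻¹) * (a, g) := by
      rw [hmul, hmul]
      refine Prod.ext ?_ ?_
      · simp only
        rw [htriv _ (hHnormal.conj_mem h hh g) a, mul_assoc a, key]
        simp [mul_assoc, mul_comm, mul_left_comm]
      · simp only
        group
    rw [goal2]
    simp [Prod.ext_iff, mul_assoc]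
end

section
/- Let (M,μ) be a compact manifold with volume form μ and η a closed 2-form on M. Then the Lichnerowicz cocycle ω(X,Y) := ∫_M η(X,Y) μ is a Lie algebra 2-cocycle on the Lie algebra 𝔛_μ(M) of divergence-free vector fields with values in the trivial module ℝ: it is alternating bilinear and ω([X₁,X₂],X₃) + ω([X₂,X₃],X₁) + ω([X₃,X₁],X₂) = 0. -/
open MeasureTheory

section LichnerowiczHelpers

variable {n : ℕ}

/-- Trace of a continuous linear endomorphism of Euclidean space as a sum of diagonal entries. -/
lemma stmt17_trace_eq_sum_diag (A : EuclideanSpace ℝ (Fin n) →L[ℝ] EuclideanSpace ℝ (Fin n)) :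
    LinearMap.trace ℝ (EuclideanSpace ℝ (Fin n)) A.toLinearMap
      = ∑ i, A (EuclideanSpace.single i (1:ℝ)) i := by
  classical
  rw [LinearMap.trace_eq_matrix_trace ℝ ((EuclideanSpace.basisFun (Fin n) ℝ).toBasis)]
  simp [Matrix.trace, Matrix.diag, LinearMap.toMatrix_apply]

/-- Integration by parts: the integral of the derivative of a smooth function along a smooth,
compactly supported, divergence-free vector field vanishes. -/
lemma stmt17_key_ibp {f : EuclideanSpace ℝ (Fin n) → ℝ}
    {X : EuclideanSpace ℝ (Fin n) → EuclideanSpace ℝ (Fin n)}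
    (hf : ContDiff ℝ (⊤ : ℕ∞) f) (hX : ContDiff ℝ (⊤ : ℕ∞) X) (hc : HasCompactSupport X)
    (hdiv : ∀ x, ∑ i, fderiv ℝ X x (EuclideanSpace.single i (1:ℝ)) i = 0) :
    ∫ x, fderiv ℝ f x (X x) = 0 := by
  classical
  have hXd : Differentiable ℝ X := hX.differentiable (by simp)
  have hfd : Differentiable ℝ f := hf.differentiable (by simp)
  have hfC : Continuous f := hf.continuous
  have hf' : Continuous (fderiv ℝ f) := (hf.fderiv_right (m := (⊤ : ℕ∞)) (by simp)).continuous
  set e : Fin n → EuclideanSpace ℝ (Fin n) := fun i => EuclideanSpace.single i (1:ℝ) with he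
  set Xi : Fin n → EuclideanSpace ℝ (Fin n) → ℝ := fun i y => X y i with hXi
  have hXiC : ∀ i, ContDiff ℝ (⊤ : ℕ∞) (Xi i) := fun i =>
    (EuclideanSpace.proj (𝕜 := ℝ) i).contDiff.comp hX
  have hXifd : ∀ i x, fderiv ℝ (Xi i) x = (EuclideanSpace.proj (𝕜 := ℝ) i).comp (fderiv ℝ X x) := by
    intro i x
    have : Xi i = (EuclideanSpace.proj (𝕜 := ℝ) i) ∘ X := rfl
    rw [this, fderiv_comp x ((EuclideanSpace.proj (𝕜 := ℝ) i).differentiableAt) (hXd x),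
      ContinuousLinearMap.fderiv]
  have hXic : ∀ i, HasCompactSupport (Xi i) := by
    intro i
    apply hc.mono
    intro x hx
    simp only [Function.mem_support] at hx ⊢
    intro h
    exact hx (by simp [hXi, h])
  have int1 : ∀ i, Integrable (fun x => fderiv ℝ (Xi i) x (e i) * f x) := by
    intro i
    apply Continuous.integrable_of_hasCompactSupport
    · exact (((hXiC i).fderiv_right (m := (⊤ : ℕ∞)) (by simp)).continuous.clm_apply continuous_const).mul hfC
    · apply ((hXic i).fderiv (𝕜 := ℝ)).mono
      intro x hx
      simp only [Function.mem_support] at hx ⊢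
      intro h
      exact hx (by simp [h])
  have int2 : ∀ i, Integrable (fun x => Xi i x * fderiv ℝ f x (e i)) := by
    intro i
    apply Continuous.integrable_of_hasCompactSupport
    · exact ((hXiC i).continuous).mul (hf'.clm_apply continuous_const)
    · apply (hXic i).mono
      intro x hx
      simp only [Function.mem_support] at hx ⊢
      intro h
      exact hx (by simp [h])
  have int3 : ∀ i, Integrable (fun x => Xi i x * f x) := by
    intro i
    apply Continuous.integrable_of_hasCompactSupport
    · exact ((hXiC i).continuous).mul hfC
    · apply (hXic i).mono
      intro x hx
      simp only [Function.mem_support] at hx ⊢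
      intro h
      exact hx (by simp [h])
  have key : ∀ i, ∫ x, Xi i x * fderiv ℝ f x (e i) = - ∫ x, fderiv ℝ (Xi i) x (e i) * f x :=
    fun i => integral_mul_fderiv_eq_neg_fderiv_mul_of_integrable (int1 i) (int2 i) (int3 i)
      (fun x _ => (hXiC i).differentiable (by simp) x) (fun x _ => hfd x)
  have expand : ∀ x, fderiv ℝ f x (X x) = ∑ i, Xi i x * fderiv ℝ f x (e i) := by
    intro x
    have hx : X x = ∑ i, Xi i x • e i := by
      have := (EuclideanSpace.basisFun (Fin n) ℝ).sum_repr (X x)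
      simp only [EuclideanSpace.basisFun_apply, EuclideanSpace.basisFun_repr] at this
      exact this.symm
    rw [hx, map_sum]
    simp [smul_eq_mul]
  calc ∫ x, fderiv ℝ f x (X x) = ∫ x, ∑ i, Xi i x * fderiv ℝ f x (e i) := by
        simp_rw [expand]
    _ = ∑ i, ∫ x, Xi i x * fderiv ℝ f x (e i) := integral_finset_sum _ (fun i _ => int2 i)
    _ = ∑ i, - ∫ x, fderiv ℝ (Xi i) x (e i) * f x := by simp_rw [key]
    _ = - ∑ i, ∫ x, fderiv ℝ (Xi i) x (e i) * f x := by rw [Finset.sum_neg_distrib]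
    _ = - ∫ x, ∑ i, fderiv ℝ (Xi i) x (e i) * f x := by
        rw [integral_finset_sum _ (fun i _ => int1 i)]
    _ = 0 := by
        have h0 : ∀ x, ∑ i, fderiv ℝ (Xi i) x (e i) * f x = 0 := by
          intro x
          rw [← Finset.sum_mul]
          have : ∑ i, fderiv ℝ (Xi i) x (e i) = 0 := by
            simp_rw [hXifd]
            simpa using hdiv x
          rw [this, zero_mul]
        simp_rw [h0]
        simp

/-- Derivative of a two-form evaluated at constant vectors. -/
lemma stmt17_fderiv_eta_apply
    (η : EuclideanSpace ℝ (Fin n) →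
      EuclideanSpace ℝ (Fin n) →L[ℝ] EuclideanSpace ℝ (Fin n) →L[ℝ] ℝ)
    (hη : ContDiff ℝ (⊤ : ℕ∞) η) (x u v w : EuclideanSpace ℝ (Fin n)) :
    fderiv ℝ (fun y => η y v w) x u = fderiv ℝ η x u v w := by
  have hd := hη.differentiable (by simp)
  have h1 : fderiv ℝ (fun y => η y v) x = (fderiv ℝ η x).flip v := by
    rw [fderiv_clm_apply (hd x) (differentiableAt_const v)]
    simp
  rw [fderiv_clm_apply ((hd x).clm_apply (differentiableAt_const v)) (differentiableAt_const w)]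
  simp [h1]

/-- Leibniz rule for `x ↦ η x (Y x) (Z x)`. -/
lemma stmt17_fderiv_eta_vf
    (η : EuclideanSpace ℝ (Fin n) →
      EuclideanSpace ℝ (Fin n) →L[ℝ] EuclideanSpace ℝ (Fin n) →L[ℝ] ℝ)
    (hη : ContDiff ℝ (⊤ : ℕ∞) η)
    (Y Z : EuclideanSpace ℝ (Fin n) → EuclideanSpace ℝ (Fin n))
    (hY : ContDiff ℝ (⊤ : ℕ∞) Y) (hZ : ContDiff ℝ (⊤ : ℕ∞) Z) (x v : EuclideanSpace ℝ (Fin n)) :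
    fderiv ℝ (fun y => η y (Y y) (Z y)) x v
      = fderiv ℝ η x v (Y x) (Z x) + η x (fderiv ℝ Y x v) (Z x)
        + η x (Y x) (fderiv ℝ Z x v) := by
  have hd := hη.differentiable (by simp)
  have hYd := hY.differentiable (by simp)
  have hZd := hZ.differentiable (by simp)
  have hc : DifferentiableAt ℝ (fun y => η y (Y y)) x := (hd x).clm_apply (hYd x)
  rw [fderiv_clm_apply hc (hZd x)]
  rw [fderiv_clm_apply (hd x) (hYd x)]
  simp
  ring

end LichnerowiczHelpers

/-- The Lichnerowicz cocycle.  The manifold with volume form `(M,μ)` is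
realized as `ℝⁿ` with the Lebesgue volume, with smooth compactly supported vector fields
(so that the integration-by-parts/Stokes arguments available on a compact manifold hold).
`η` is a closed 2-form, the fields `X₁, X₂, X₃` are divergence free
(`L_X μ = 0`, i.e. `tr(DX) = 0`), the bracket is the Lie bracket of vector fields, and
`ω(X,Y) = ∫ η(X,Y) μ`.  Then `ω` is alternating and satisfies the 2-cocycle identity
`ω([X₁,X₂],X₃) + ω([X₂,X₃],X₁) + ω([X₃,X₁],X₂) = 0`. -/
theorem stmt17 {n : ℕ}
    (η : EuclideanSpace ℝ (Fin n) →
      EuclideanSpace ℝ (Fin n) →L[ℝ] EuclideanSpace ℝ (Fin n) →L[ℝ] ℝ)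
    (hη : ContDiff ℝ (⊤ : ℕ∞) η)
    (hηalt : ∀ x u v, η x u v = -η x v u)
    (hηclosed : ∀ x u v w : EuclideanSpace ℝ (Fin n),
      fderiv ℝ (fun y => η y v w) x u - fderiv ℝ (fun y => η y u w) x v
        + fderiv ℝ (fun y => η y u v) x w = 0)
    (X₁ X₂ X₃ : EuclideanSpace ℝ (Fin n) → EuclideanSpace ℝ (Fin n))
    (hX₁ : ContDiff ℝ (⊤ : ℕ∞) X₁) (hX₂ : ContDiff ℝ (⊤ : ℕ∞) X₂) (hX₃ : ContDiff ℝ (⊤ : ℕ∞) X₃)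
    (hc₁ : HasCompactSupport X₁) (hc₂ : HasCompactSupport X₂) (hc₃ : HasCompactSupport X₃)
    (hdiv₁ : ∀ x, LinearMap.trace ℝ (EuclideanSpace ℝ (Fin n)) (fderiv ℝ X₁ x).toLinearMap = 0)
    (hdiv₂ : ∀ x, LinearMap.trace ℝ (EuclideanSpace ℝ (Fin n)) (fderiv ℝ X₂ x).toLinearMap = 0)
    (hdiv₃ : ∀ x, LinearMap.trace ℝ (EuclideanSpace ℝ (Fin n)) (fderiv ℝ X₃ x).toLinearMap = 0)
    -- the Lie bracket of vector fields
    (B : (EuclideanSpace ℝ (Fin n) → EuclideanSpace ℝ (Fin n)) →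
         (EuclideanSpace ℝ (Fin n) → EuclideanSpace ℝ (Fin n)) →
         EuclideanSpace ℝ (Fin n) → EuclideanSpace ℝ (Fin n))
    (hB : ∀ X Y x, B X Y x = fderiv ℝ Y x (X x) - fderiv ℝ X x (Y x))
    -- the Lichnerowicz cocycle
    (ω : (EuclideanSpace ℝ (Fin n) → EuclideanSpace ℝ (Fin n)) →
         (EuclideanSpace ℝ (Fin n) → EuclideanSpace ℝ (Fin n)) → ℝ)
    (hω : ∀ X Y, ω X Y = ∫ x, η x (X x) (Y x)) :
    (∀ X Y, ω X Y = -ω Y X) ∧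
    ω (B X₁ X₂) X₃ + ω (B X₂ X₃) X₁ + ω (B X₃ X₁) X₂ = 0 := by
  constructor
  · intro X Y
    have h : (fun x => η x (X x) (Y x)) = fun x => -η x (Y x) (X x) :=
      funext fun x => hηalt x (X x) (Y x)
    rw [hω, hω, h, integral_neg]
  -- continuity facts
  have hηC : Continuous η := hη.continuous
  have hX₁C := hX₁.continuous
  have hX₂C := hX₂.continuous
  have hX₃C := hX₃.continuous
  have hX₁' : Continuous (fderiv ℝ X₁) := (hX₁.fderiv_right (m := (⊤ : ℕ∞)) (by simp)).continuous
  have hX₂' : Continuous (fderiv ℝ X₂) := (hX₂.fderiv_right (m := (⊤ : ℕ∞)) (by simp)).continuous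
  have hX₃' : Continuous (fderiv ℝ X₃) := (hX₃.fderiv_right (m := (⊤ : ℕ∞)) (by simp)).continuous
  -- integrability helper for `η (b ·) (W ·)` with compactly supported `W`
  have ib : ∀ (b W : EuclideanSpace ℝ (Fin n) → EuclideanSpace ℝ (Fin n)),
      Continuous b → Continuous W → HasCompactSupport W →
      Integrable (fun x => η x (b x) (W x)) := by
    intro b W hb hW hcW
    apply Continuous.integrable_of_hasCompactSupport
    · exact (hηC.clm_apply hb).clm_apply hW
    · apply hcW.mono
      intro x hx
      simp only [Function.mem_support] at hx ⊢
      intro h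
      exact hx (by simp [h])
  -- integrability helper for `fderiv f · (W ·)` with compactly supported `W`
  have iD : ∀ (f : EuclideanSpace ℝ (Fin n) → ℝ)
      (W : EuclideanSpace ℝ (Fin n) → EuclideanSpace ℝ (Fin n)),
      Continuous (fderiv ℝ f) → Continuous W → HasCompactSupport W →
      Integrable (fun x => fderiv ℝ f x (W x)) := by
    intro f W hf hW hcW
    apply Continuous.integrable_of_hasCompactSupport
    · exact hf.clm_apply hW
    · apply hcW.mono
      intro x hx
      simp only [Function.mem_support] at hx ⊢
      intro h
      exact hx (by simp [h])
  -- continuity of the brackets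
  have hB12 : Continuous (B X₁ X₂) := by
    have : B X₁ X₂ = fun x => fderiv ℝ X₂ x (X₁ x) - fderiv ℝ X₁ x (X₂ x) := funext (hB X₁ X₂)
    rw [this]; exact (hX₂'.clm_apply hX₁C).sub (hX₁'.clm_apply hX₂C)
  have hB23 : Continuous (B X₂ X₃) := by
    have : B X₂ X₃ = fun x => fderiv ℝ X₃ x (X₂ x) - fderiv ℝ X₂ x (X₃ x) := funext (hB X₂ X₃)
    rw [this]; exact (hX₃'.clm_apply hX₂C).sub (hX₂'.clm_apply hX₃C)
  have hB31 : Continuous (B X₃ X₁) := by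
    have : B X₃ X₁ = fun x => fderiv ℝ X₁ x (X₃ x) - fderiv ℝ X₃ x (X₁ x) := funext (hB X₃ X₁)
    rw [this]; exact (hX₁'.clm_apply hX₃C).sub (hX₃'.clm_apply hX₁C)
  have i1 := ib (B X₁ X₂) X₃ hB12 hX₃C hc₃
  have i2 := ib (B X₂ X₃) X₁ hB23 hX₁C hc₁
  have i3 := ib (B X₃ X₁) X₂ hB31 hX₂C hc₂
  -- the scalar functions fᵢ and their smoothness
  have f₁s : ContDiff ℝ (⊤ : ℕ∞) (fun y => η y (X₂ y) (X₃ y)) := (hη.clm_apply hX₂).clm_apply hX₃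
  have f₂s : ContDiff ℝ (⊤ : ℕ∞) (fun y => η y (X₃ y) (X₁ y)) := (hη.clm_apply hX₃).clm_apply hX₁
  have f₃s : ContDiff ℝ (⊤ : ℕ∞) (fun y => η y (X₁ y) (X₂ y)) := (hη.clm_apply hX₁).clm_apply hX₂
  have iD₁ := iD _ X₁ (f₁s.fderiv_right (m := (⊤ : ℕ∞)) (by simp)).continuous hX₁C hc₁
  have iD₂ := iD _ X₂ (f₂s.fderiv_right (m := (⊤ : ℕ∞)) (by simp)).continuous hX₂C hc₂
  have iD₃ := iD _ X₃ (f₃s.fderiv_right (m := (⊤ : ℕ∞)) (by simp)).continuous hX₃C hc₃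
  -- divergence-free in coordinate form
  have hd₁ : ∀ x, ∑ i, fderiv ℝ X₁ x (EuclideanSpace.single i (1:ℝ)) i = 0 := fun x => by
    rw [← stmt17_trace_eq_sum_diag]; exact hdiv₁ x
  have hd₂ : ∀ x, ∑ i, fderiv ℝ X₂ x (EuclideanSpace.single i (1:ℝ)) i = 0 := fun x => by
    rw [← stmt17_trace_eq_sum_diag]; exact hdiv₂ x
  have hd₃ : ∀ x, ∑ i, fderiv ℝ X₃ x (EuclideanSpace.single i (1:ℝ)) i = 0 := fun x => by
    rw [← stmt17_trace_eq_sum_diag]; exact hdiv₃ x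
  -- the pointwise identity
  have hpt : ∀ x, η x (B X₁ X₂ x) (X₃ x) + η x (B X₂ X₃ x) (X₁ x) + η x (B X₃ X₁ x) (X₂ x)
      = fderiv ℝ (fun y => η y (X₂ y) (X₃ y)) x (X₁ x)
        + fderiv ℝ (fun y => η y (X₃ y) (X₁ y)) x (X₂ x)
        + fderiv ℝ (fun y => η y (X₁ y) (X₂ y)) x (X₃ x) := by
    intro x
    have d1 := stmt17_fderiv_eta_vf η hη X₂ X₃ hX₂ hX₃ x (X₁ x)
    have d2 := stmt17_fderiv_eta_vf η hη X₃ X₁ hX₃ hX₁ x (X₂ x)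
    have d3 := stmt17_fderiv_eta_vf η hη X₁ X₂ hX₁ hX₂ x (X₃ x)
    have hanti : ∀ u v w, fderiv ℝ η x u v w = - fderiv ℝ η x u w v := by
      intro u v w
      have h : (fun y => η y v w) = fun y => -η y w v := funext fun y => hηalt y v w
      have h2 := stmt17_fderiv_eta_apply η hη x u v w
      rw [h] at h2
      rw [← h2, fderiv_fun_neg, ContinuousLinearMap.neg_apply, stmt17_fderiv_eta_apply η hη]
    have hcl := hηclosed x (X₁ x) (X₂ x) (X₃ x)
    rw [stmt17_fderiv_eta_apply η hη, stmt17_fderiv_eta_apply η hη,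
      stmt17_fderiv_eta_apply η hη] at hcl
    have e2 := hanti (X₂ x) (X₃ x) (X₁ x)
    have a1 := hηalt x (X₂ x) (fderiv ℝ X₃ x (X₁ x))
    have a2 := hηalt x (X₃ x) (fderiv ℝ X₁ x (X₂ x))
    have a3 := hηalt x (X₁ x) (fderiv ℝ X₂ x (X₃ x))
    simp only [hB, map_sub, ContinuousLinearMap.sub_apply]
    rw [d1, d2, d3]
    linarith
  have i12 : Integrable (fun x => η x (B X₁ X₂ x) (X₃ x) + η x (B X₂ X₃ x) (X₁ x)) volume :=
    i1.add i2
  have iD12 : Integrable (fun x => fderiv ℝ (fun y => η y (X₂ y) (X₃ y)) x (X₁ x)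
      + fderiv ℝ (fun y => η y (X₃ y) (X₁ y)) x (X₂ x)) volume := iD₁.add iD₂
  rw [hω, hω, hω, ← integral_add i1 i2, ← integral_add i12 i3]
  rw [show (fun x => η x (B X₁ X₂ x) (X₃ x) + η x (B X₂ X₃ x) (X₁ x) + η x (B X₃ X₁ x) (X₂ x))
      = fun x => fderiv ℝ (fun y => η y (X₂ y) (X₃ y)) x (X₁ x)
        + fderiv ℝ (fun y => η y (X₃ y) (X₁ y)) x (X₂ x)
        + fderiv ℝ (fun y => η y (X₁ y) (X₂ y)) x (X₃ x) from funext hpt]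
  rw [integral_add iD12 iD₃, integral_add iD₁ iD₂,
    stmt17_key_ibp f₁s hX₁ hc₁ hd₁, stmt17_key_ibp f₂s hX₂ hc₂ hd₂,
    stmt17_key_ibp f₃s hX₃ hc₃ hd₃]
  norm_num
end
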